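/- arXiv:1311.0596 — 2 statements merged into one kernel-verified Lean document; each statement's English description precedes it below -/
import Mathlib

section
/- Let ψ(x) = Σ_{k≥0} γ_k x^k/k! be a real entire function in the Laguerre–Pólya class with ψ(0) ≠ 0 and Appell polynomials A_n(ψ;x) = Σ_{j=0}^{n} C(n,j) γ_j x^{n−j}. Then the functions x ↦ (x/n)^n A_n(ψ; n/x) extend to polynomials in x that converge to ψ(x) uniformly on compact subsets of ℂ. -/
/-!
Substituting `y = x / n` turns `(x/n)^n A_n(ψ; n/x)` into the Jensen polynomial
`g_n(ψ; x/n) = Σ_j C(n,j)/n^j γ_j x^j`. The weights satisfy `0 ≤ C(n,j)/n^j ≤ 1/j!` and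
`C(n,j)/n^j → 1/j!`, so on the disc of radius `r` the series is dominated by
`Σ_j |γ_j| r^j / j!`, which converges because `ψ` is entire; Tannery's theorem (dominated
convergence for series) then gives uniform convergence to `Σ_j γ_j x^j / j! = ψ(x)` on every disc.
-/

/-- The Laguerre–Pólya class: `ψ(x) = c x^m e^{-ax² + bx} ∏_k (1 + x/x_k) e^{-x/x_k}`
with `c, b, x_k` real, `a ≥ 0`, `m` a nonnegative integer, the product over a finite or
countable family of nonzero reals `x_k` with `Σ x_k⁻² < ∞`. -/
def IsLaguerrePolya (ψ : ℂ → ℂ) : Prop :=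
  ∃ (ι : Type) (_ : Countable ι) (c b a : ℝ) (mdeg : ℕ) (x : ι → ℝ),
    0 ≤ a ∧ (∀ k, x k ≠ 0) ∧ Summable (fun k => ((x k) ^ 2)⁻¹) ∧
    (∀ z : ℂ,
      Multipliable (fun k : ι => (1 + z / (x k)) * Complex.exp (-(z / (x k))))) ∧
    (∀ z : ℂ, ψ z = (c : ℂ) * z ^ mdeg *
      Complex.exp (-(a : ℂ) * z ^ 2 + (b : ℂ) * z) *
      ∏' k : ι, (1 + z / (x k)) * Complex.exp (-(z / (x k))))

/-- The `n`-th Jensen polynomial `g_n(ψ; x) = Σ_{j=0}^n (n choose j) γ_j x^j` of a real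
entire function with Maclaurin coefficients `γ_k` (so `ψ(x) = Σ γ_k x^k / k!`). -/
noncomputable def jensenPoly (γ : ℕ → ℝ) (n : ℕ) (x : ℂ) : ℂ :=
  ∑ j ∈ Finset.range (n + 1), (n.choose j : ℂ) * (γ j : ℂ) * x ^ j

/-- The `n`-th Appell polynomial `A_n(ψ; x) = Σ_{j=0}^n (n choose j) γ_j x^{n-j}`. -/
noncomputable def appellPoly (γ : ℕ → ℝ) (n : ℕ) (x : ℂ) : ℂ :=
  ∑ j ∈ Finset.range (n + 1), (n.choose j : ℂ) * (γ j : ℂ) * x ^ (n - j)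

open Filter Finset Topology Metric Polynomial
open scoped Nat

section Tannery

variable {𝕜 : Type*} [NormedField 𝕜]

theorem summable_norm_mul_pow_of_norm_le {c : ℕ → 𝕜} {B : ℕ → ℝ} {r : ℝ} {x : 𝕜}
    (hc : ∀ j, ‖c j‖ ≤ B j) (hsum : Summable fun j => B j * r ^ j) (hx : ‖x‖ ≤ r) :
    Summable fun j => ‖c j * x ^ j‖ :=
  hsum.of_nonneg_of_le (fun _ => norm_nonneg _) fun j => by
    rw [norm_mul, norm_pow]
    exact mul_le_mul (hc j) (pow_le_pow_left₀ (norm_nonneg x) hx j) (by positivity)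
      ((norm_nonneg _).trans (hc j))

variable [CompleteSpace 𝕜]

theorem norm_tsum_mul_pow_sub_le {c b : ℕ → 𝕜} {B : ℕ → ℝ} {r : ℝ} {x : 𝕜}
    (hc : ∀ j, ‖c j‖ ≤ B j) (hb : ∀ j, ‖b j‖ ≤ B j) (hsum : Summable fun j => B j * r ^ j)
    (hx : ‖x‖ ≤ r) :
    ‖∑' j, c j * x ^ j - ∑' j, b j * x ^ j‖ ≤ ∑' j, ‖c j - b j‖ * r ^ j := by
  have hcb : ∀ j, ‖c j - b j‖ ≤ 2 * B j := fun j => by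
    linarith [norm_sub_le (c j) (b j), hc j, hb j]
  have hsum2 : Summable fun j => 2 * B j * r ^ j := by
    simpa only [mul_assoc] using hsum.mul_left 2
  have hr : 0 ≤ r := (norm_nonneg x).trans hx
  have hdiff := summable_norm_mul_pow_of_norm_le hcb hsum2 hx
  rw [← (summable_norm_mul_pow_of_norm_le hc hsum hx).of_norm.tsum_sub
    (summable_norm_mul_pow_of_norm_le hb hsum hx).of_norm]
  simp only [← sub_mul]
  have hle : ∀ j, ‖(c j - b j) * x ^ j‖ ≤ ‖c j - b j‖ * r ^ j := fun j => by
    rw [norm_mul, norm_pow]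
    exact mul_le_mul_of_nonneg_left (pow_le_pow_left₀ (norm_nonneg x) hx j) (norm_nonneg _)
  have hmaj : Summable fun j => ‖c j - b j‖ * r ^ j :=
    hsum2.of_nonneg_of_le (fun _ => by positivity) fun j =>
      mul_le_mul_of_nonneg_right (hcb j) (pow_nonneg hr j)
  exact (norm_tsum_le_tsum_norm hdiff).trans (hdiff.tsum_le_tsum hle hmaj)

theorem tendstoUniformlyOn_tsum_mul_pow_of_dominated {α : Type*} {𝓕 : Filter α} [𝓕.NeBot]
    {c : α → ℕ → 𝕜} {b : ℕ → 𝕜} {B : ℕ → ℝ} {r : ℝ}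
    (hc : ∀ j, Tendsto (c · j) 𝓕 (𝓝 (b j))) (hB : ∀ n j, ‖c n j‖ ≤ B j)
    (hsum : Summable fun j => B j * r ^ j) :
    TendstoUniformlyOn (fun n x => ∑' j, c n j * x ^ j) (fun x => ∑' j, b j * x ^ j) 𝓕
      (closedBall 0 r) := by
  rcases lt_or_ge r 0 with hr | hr
  · rw [closedBall_eq_empty.2 hr]
    exact tendstoUniformlyOn_empty
  have hb : ∀ j, ‖b j‖ ≤ B j := fun j =>
    le_of_tendsto (hc j).norm (Eventually.of_forall fun n => hB n j)
  have herr : Tendsto (fun n => ∑' j, ‖c n j - b j‖ * r ^ j) 𝓕 (𝓝 0) := by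
    have hsum2 : Summable fun j => 2 * B j * r ^ j := by
      simpa only [mul_assoc] using hsum.mul_left 2
    have hlim (j : ℕ) : Tendsto (fun n => ‖c n j - b j‖ * r ^ j) 𝓕 (𝓝 0) := by
      simpa using ((hc j).sub_const (b j)).norm.mul_const (r ^ j)
    have hdom : ∀ n j, ‖‖c n j - b j‖ * r ^ j‖ ≤ 2 * B j * r ^ j := fun n j => by
      rw [Real.norm_of_nonneg (by positivity)]
      gcongr
      linarith [norm_sub_le (c n j) (b j), hB n j, hb j]
    simpa using tendsto_tsum_of_dominated_convergence hsum2 hlim (.of_forall hdom)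
  rw [Metric.tendstoUniformlyOn_iff]
  intro ε hε
  filter_upwards [herr.eventually (gt_mem_nhds hε)] with n hn x hx
  rw [dist_comm, dist_eq_norm]
  exact (norm_tsum_mul_pow_sub_le (hB n) hb hsum (by simpa using hx)).trans_lt hn

end Tannery

namespace Nat

theorem choose_div_pow_le_inv_factorial (n j : ℕ) : (n.choose j : ℝ) / n ^ j ≤ (j ! : ℝ)⁻¹ := by
  refine div_le_of_le_mul₀ (by positivity) (by positivity) ?_
  simpa [div_eq_inv_mul] using Nat.choose_le_pow_div (α := ℝ) j n

theorem tendsto_choose_div_pow (j : ℕ) :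
    Tendsto (fun n : ℕ => (n.choose j : ℝ) / n ^ j) atTop (𝓝 (j ! : ℝ)⁻¹) := by
  have hn : Tendsto (fun n : ℕ => (n : ℝ) * (n : ℝ)⁻¹) atTop (𝓝 1) :=
    tendsto_const_nhds.congr' <| (eventually_ne_atTop 0).mono fun n hn => by field_simp
  simpa [div_eq_mul_inv] using ProbabilityTheory.tendsto_choose_mul_pow_atTop j hn

end Nat

noncomputable def jensenPolynomial (γ : ℕ → ℝ) (n : ℕ) : ℂ[X] :=
  ∑ j ∈ range (n + 1), C ((n.choose j : ℂ) * γ j) * X ^ j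

theorem eval_jensenPolynomial (γ : ℕ → ℝ) (n : ℕ) (x : ℂ) :
    (jensenPolynomial γ n).eval x = jensenPoly γ n x := by
  simp [jensenPolynomial, jensenPoly, eval_finsetSum]

theorem pow_mul_appellPoly_inv (γ : ℕ → ℝ) (n : ℕ) {y : ℂ} (hy : y ≠ 0) :
    y ^ n * appellPoly γ n y⁻¹ = jensenPoly γ n y := by
  rw [appellPoly, jensenPoly, mul_sum]
  refine sum_congr rfl fun j hj => ?_
  rw [← pow_sub_mul_pow y (Nat.le_of_lt_succ (mem_range.1 hj)), inv_pow]
  field_simp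

theorem jensenPoly_div_eq_tsum (γ : ℕ → ℝ) (n : ℕ) (x : ℂ) :
    jensenPoly γ n (x / n) = ∑' j, ((n.choose j / n ^ j : ℝ) * γ j : ℂ) * x ^ j := by
  rw [jensenPoly, tsum_eq_sum fun j hj => ?_]
  · refine sum_congr rfl fun j _ => ?_
    push_cast
    ring
  · rw [Nat.choose_eq_zero_of_lt (by simpa using hj)]
    simp

theorem statement8_general
    (γ : ℕ → ℝ) (ψ : ℂ → ℂ)
    (hψ : ∀ z : ℂ, HasSum (fun k : ℕ => (γ k : ℂ) * z ^ k / (Nat.factorial k : ℂ)) (ψ z)) :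
    ∃ Q : ℕ → Polynomial ℂ,
      (∀ n : ℕ, 1 ≤ n → ∀ x : ℂ, x ≠ 0 →
        (Q n).eval x = (x / n) ^ n * appellPoly γ n ((n : ℂ) / x)) ∧
      TendstoLocallyUniformly (fun n : ℕ => fun x : ℂ => (Q n).eval x)
        ψ Filter.atTop := by
  have hQ (n : ℕ) (x : ℂ) :
      ((jensenPolynomial γ n).comp (C (n : ℂ)⁻¹ * X)).eval x = jensenPoly γ n (x / n) := by
    rw [eval_comp, eval_jensenPolynomial, eval_mul, eval_C, eval_X, inv_mul_eq_div]
  refine ⟨fun n => (jensenPolynomial γ n).comp (C (n : ℂ)⁻¹ * X), fun n hn x hx => ?_, ?_⟩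
  · have hn0 : (n : ℂ) ≠ 0 := Nat.cast_ne_zero.2 (by omega)
    rw [hQ, ← pow_mul_appellPoly_inv γ n (div_ne_zero hx hn0), inv_div]
  have hψ_eq : ψ = fun x => ∑' j, ((j ! : ℝ)⁻¹ * γ j : ℂ) * x ^ j := funext fun x => by
    rw [← (hψ x).tsum_eq]
    exact tsum_congr fun j => by push_cast; ring
  simp only [hQ, jensenPoly_div_eq_tsum, hψ_eq]
  refine tendstoLocallyUniformly_of_forall_exists_nhds fun x =>
    ⟨closedBall 0 (‖x‖ + 1), closedBall_mem_nhds_of_mem (by simp), ?_⟩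
  refine tendstoUniformlyOn_tsum_mul_pow_of_dominated (B := fun j => (j ! : ℝ)⁻¹ * |γ j|)
    (fun j => ?_) (fun n j => ?_) ?_
  · exact ((Nat.tendsto_choose_div_pow j).ofReal).mul_const _
  · rw [norm_mul, Complex.norm_real, Complex.norm_real, Real.norm_of_nonneg (by positivity),
      Real.norm_eq_abs]
    exact mul_le_mul_of_nonneg_right (Nat.choose_div_pow_le_inv_factorial n j) (abs_nonneg _)
  · refine (hψ (‖x‖ + 1 : ℝ)).summable.norm.congr fun j => ?_
    rw [norm_div, norm_mul, norm_pow, Complex.norm_real, Complex.norm_real, Complex.norm_natCast,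
      Real.norm_eq_abs, Real.norm_of_nonneg (by positivity)]
    ring

/-- If `ψ(x) = Σ γ_k x^k / k!` is a real entire function in the
Laguerre–Pólya class with `ψ(0) ≠ 0`, then the functions `x ↦ (x/n)^n A_n(ψ; n/x)`
extend to polynomials in `x` converging to `ψ` uniformly on compact subsets of `ℂ`. -/
theorem statement8
    (γ : ℕ → ℝ) (ψ : ℂ → ℂ)
    (hψ : ∀ z : ℂ, HasSum (fun k : ℕ => (γ k : ℂ) * z ^ k / (Nat.factorial k : ℂ)) (ψ z))
    (h0 : ψ 0 ≠ 0)
    (hLP : IsLaguerrePolya ψ) :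
    ∃ Q : ℕ → Polynomial ℂ,
      (∀ n : ℕ, 1 ≤ n → ∀ x : ℂ, x ≠ 0 →
        (Q n).eval x = (x / n) ^ n * appellPoly γ n ((n : ℂ) / x)) ∧
      TendstoLocallyUniformly (fun n : ℕ => fun x : ℂ => (Q n).eval x)
        ψ Filter.atTop :=
  statement8_general γ ψ hψ
end

section
/- Let (m_k)_{k≥0} be a moment sequence with all Hankel determinants D_n > 0, μ the corresponding positive Borel measure, (p_n) its orthonormal polynomials given by p_n(x) = (D_{n−1} D_n)^{−1/2} D_n(x), and q_n(z) = Σ_{j=0}^{n} C(n,j) m_j (−z)^{n−j}. Then for every n ≥ 1, (−1)^n q_n(z) = (√(m_0 D_n) / C_n) · W(p_1,…,p_n; z), where C_n = ∏_{k=1}^{n−1} k!. -/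
open MeasureTheory Polynomial

/-- Determinant of the `(n+1) × (n+1)` Hankel matrix with `(j,ℓ)` entry `m (j + ℓ)`. -/
noncomputable def hankelDet (m : ℕ → ℝ) (n : ℕ) : ℝ :=
  (Matrix.of fun i j : Fin (n + 1) => m (i.1 + j.1)).det

/-- `C_n = ∏_{k=1}^{n-1} k!` (equivalently `∏_{k=0}^{n-1} k!`). -/
noncomputable def bigC (n : ℕ) : ℝ :=
  ∏ k ∈ Finset.range n, (Nat.factorial k : ℝ)

/-- Wronskian of a tuple of real polynomials, as a polynomial: `det (f_j^{(i-1)})`. -/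
noncomputable def polyWronskianR {n : ℕ} (f : Fin n → Polynomial ℝ) : Polynomial ℝ :=
  (Matrix.of fun i j : Fin n => Polynomial.derivative^[i.1] (f j)).det

/-- The polynomial `D_n(z)`: determinant of the `(n+1) × (n+1)` matrix whose rows
`i = 0, …, n-1` are `(m_i, m_{i+1}, …, m_{i+n})` and whose last row is
`(1, z, …, z^n)`. -/
noncomputable def DPoly (m : ℕ → ℝ) (n : ℕ) : Polynomial ℝ :=
  (Matrix.of fun i j : Fin (n + 1) =>
    if (i : ℕ) < n then Polynomial.C (m (i.1 + j.1)) else Polynomial.X ^ (j : ℕ)).det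

/-- `q_n(z) = Σ_{j=0}^n (n choose j) m_j (−z)^{n−j}`. -/
noncomputable def qPoly (m : ℕ → ℝ) (n : ℕ) : Polynomial ℝ :=
  ∑ j ∈ Finset.range (n + 1),
    Polynomial.C ((n.choose j : ℝ) * m j) * (-Polynomial.X) ^ (n - j)

/-!
Fix `z` and let `L` be the moment functional `x ^ k ↦ m k`. Then `q_n(z) = L((x - z) ^ n)`, and
the shifted moments `ν_k = L((x - z) ^ k)` have Hankel matrices `Uᵀ H U` with `U` unitriangular,
so they have the same Hankel determinants and their `D_j` is `D_j(x + z)`. By Taylor's formula the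
Wronskian matrix of `D_1, …, D_n` at `z` is therefore `diag(i!)` times the coefficient matrix of
the `D_j` built from `ν`. For any sequence, that coefficient matrix bordered by the column of
`x ^ n` becomes, after multiplication by the Hankel matrix, the lower triangular matrix of the
values `L(x ^ i D_j)`, whose diagonal is `ν_n, D_1, …, D_n` by orthogonality. What remains is a
telescoping product of the normalising constants.
-/

open Finset
open scoped Matrix

namespace Polynomial

variable {R : Type*} [CommRing R]

theorem eval_iterate_derivative_eq_coeff_taylor (f : R[X]) (z : R) (i : ℕ) :
    (derivative^[i] f).eval z = i.factorial * (taylor z f).coeff i := by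
  rw [← factorial_smul_hasseDeriv, taylor_coeff, LinearMap.smul_apply, nsmul_eq_mul, eval_mul,
    eval_natCast]

theorem natDegree_X_sub_C_pow [Nontrivial R] (z : R) (j : ℕ) : ((X - C z) ^ j).natDegree = j := by
  rw [sub_eq_add_neg, ← C_neg, natDegree_pow_X_add_C]

theorem _root_.LinearMap.map_mul_eq_sum_coeff_smul {M : Type*} [AddCommMonoid M] [Module R M]
    (Λ : R[X] →ₗ[R] M) {f : R[X]} {d : ℕ} (hf : f.natDegree < d) (g : R[X]) :
    Λ (f * g) = ∑ ℓ : Fin d, f.coeff ℓ • Λ (X ^ (ℓ : ℕ) * g) := by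
  conv_lhs => rw [f.as_sum_range_C_mul_X_pow' hf]
  rw [Finset.sum_mul, map_sum, ← Fin.sum_univ_eq_sum_range]
  simp only [C_mul', smul_mul_assoc, map_smul]

def coeffMatrix {k : ℕ} (P : Fin k → R[X]) : Matrix (Fin k) (Fin k) R :=
  Matrix.of fun i j => (P j).coeff i

theorem det_coeffMatrix_eq_one {k : ℕ} {P : Fin k → R[X]} (hmonic : ∀ j, (P j).Monic)
    (hdeg : ∀ j, (P j).natDegree = j) : (coeffMatrix P).det = 1 := by
  rw [Matrix.det_of_isUpperTriangular]
  · refine prod_eq_one fun j _ => ?_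
    simpa [coeffMatrix, hdeg j] using (hmonic j).coeff_natDegree
  · intro i j hji
    exact coeff_eq_zero_of_natDegree_lt (by rw [hdeg]; exact hji)

theorem det_coeffMatrix_X_sub_C_pow [Nontrivial R] (k : ℕ) (z : R) :
    (coeffMatrix fun j : Fin k => (X - C z) ^ (j : ℕ)).det = 1 :=
  det_coeffMatrix_eq_one (fun _ => (monic_X_sub_C z).pow _) (fun _ => natDegree_X_sub_C_pow ..)

theorem det_coeffMatrix_cons_X_pow {n : ℕ} (F : Fin n → R[X]) :
    (coeffMatrix (Fin.cons (X ^ n) F : Fin (n + 1) → R[X])).det =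
      (-1) ^ n * (Matrix.of fun i j : Fin n => (F j).coeff i).det := by
  rw [Matrix.det_succ_column_zero, Fintype.sum_eq_single (Fin.last n)]
  · simp only [coeffMatrix, Fin.succAbove_last, Matrix.of_apply, Fin.cons_zero, coeff_X_pow_self,
      Fin.val_last, mul_one]
    rfl
  · intro i hi
    have : (i : ℕ) ≠ n := fun h => hi (Fin.ext h)
    simp [coeffMatrix, coeff_X_pow, this]

theorem pow_vecMul_coeffMatrix {k : ℕ} {P : Fin k → R[X]} (hP : ∀ j, (P j).natDegree < k)
    (y : R) : (fun i : Fin k => y ^ (i : ℕ)) ᵥ* coeffMatrix P = fun j => (P j).eval y := by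
  ext j
  rw [eval_eq_sum_range' (hP j), ← Fin.sum_univ_eq_sum_range]
  simp only [Matrix.vecMul, dotProduct, coeffMatrix, Matrix.of_apply]
  exact sum_congr rfl fun _ _ => mul_comm _ _

noncomputable def momentFunctional (m : ℕ → R) : R[X] →ₗ[R] R :=
  lsum fun k => LinearMap.mulRight R (m k)

@[simp]
theorem momentFunctional_monomial (m : ℕ → R) (k : ℕ) (c : R) :
    momentFunctional m (monomial k c) = c * m k := by
  simp [momentFunctional]

@[simp]
theorem momentFunctional_X_pow (m : ℕ → R) (k : ℕ) : momentFunctional m (X ^ k) = m k := by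
  simp [← monomial_one_right_eq_X_pow]

theorem momentFunctional_C_mul (m : ℕ → R) (c : R) (f : R[X]) :
    momentFunctional m (C c * f) = c * momentFunctional m f := by
  rw [C_mul', map_smul, smul_eq_mul]

noncomputable def shiftedMoments (m : ℕ → R) (z : R) (j : ℕ) : R :=
  momentFunctional m ((X - C z) ^ j)

theorem shiftedMoments_add (m : ℕ → R) (z : R) (a b : ℕ) :
    shiftedMoments m z (a + b) = momentFunctional m ((X - C z) ^ a * (X - C z) ^ b) := by
  rw [shiftedMoments, pow_add]

end Polynomial

theorem Matrix.det_updateRow_eq_sum_mul_adjugate {ι R : Type*} [Fintype ι] [DecidableEq ι]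
    [CommRing R] (A : Matrix ι ι R) (i : ι) (r : ι → R) :
    (A.updateRow i r).det = ∑ j, r j * A.adjugate j i := by
  rw [det_eq_sum_mul_adjugate_row _ i]
  refine sum_congr rfl fun j _ => ?_
  rw [updateRow_self, adjugate_apply, adjugate_apply, updateRow_idem]

section HankelMatrix

variable {R : Type*} [CommRing R]

def hankelMatrix (m : ℕ → R) (n : ℕ) : Matrix (Fin (n + 1)) (Fin (n + 1)) R :=
  Matrix.of fun i j => m (i + j)

theorem hankelMatrix_mul_coeffMatrix_apply (m : ℕ → R) {n : ℕ} {P : Fin (n + 1) → R[X]}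
    (hP : ∀ j, (P j).natDegree ≤ n) (i j : Fin (n + 1)) :
    (hankelMatrix m n * coeffMatrix P) i j = momentFunctional m (X ^ (i : ℕ) * P j) := by
  rw [mul_comm, (momentFunctional m).map_mul_eq_sum_coeff_smul (Nat.lt_succ_of_le (hP j)),
    Matrix.mul_apply]
  refine sum_congr rfl fun ℓ _ => ?_
  simp [hankelMatrix, coeffMatrix, ← pow_add, mul_comm]

theorem coeffMatrix_transpose_mul_hankelMatrix_mul (m : ℕ → R) {n : ℕ}
    {P : Fin (n + 1) → R[X]} (hP : ∀ j, (P j).natDegree ≤ n) :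
    (coeffMatrix P)ᵀ * (hankelMatrix m n * coeffMatrix P) =
      Matrix.of fun a b => momentFunctional m (P a * P b) := by
  ext a b
  rw [Matrix.of_apply, (momentFunctional m).map_mul_eq_sum_coeff_smul (Nat.lt_succ_of_le (hP a)),
    Matrix.mul_apply]
  refine sum_congr rfl fun i _ => ?_
  rw [hankelMatrix_mul_coeffMatrix_apply m hP]
  rfl

variable [Nontrivial R]

theorem det_hankelMatrix_shiftedMoments (m : ℕ → R) (z : R) (n : ℕ) :
    (hankelMatrix (shiftedMoments m z) n).det = (hankelMatrix m n).det := by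
  have hgram := coeffMatrix_transpose_mul_hankelMatrix_mul m
    fun j : Fin (n + 1) => (natDegree_X_sub_C_pow z j).trans_le j.is_le
  have hshift : hankelMatrix (shiftedMoments m z) n = Matrix.of fun a b : Fin (n + 1) =>
      momentFunctional m ((X - C z) ^ (a : ℕ) * (X - C z) ^ (b : ℕ)) := by
    ext a b
    exact shiftedMoments_add m z a b
  rw [hshift, ← hgram, Matrix.det_mul, Matrix.det_mul, Matrix.det_transpose,
    det_coeffMatrix_X_sub_C_pow, one_mul, mul_one]

theorem det_updateRow_last_hankelMatrix_shiftedMoments (m : ℕ → R) (z x : R) (n : ℕ) :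
    ((hankelMatrix (shiftedMoments m z) n).updateRow (Fin.last n) fun j => x ^ (j : ℕ)).det =
      ((hankelMatrix m n).updateRow (Fin.last n) fun j => (x + z) ^ (j : ℕ)).det := by
  have hdeg (j : Fin (n + 1)) : ((X - C z) ^ (j : ℕ)).natDegree ≤ n :=
    (natDegree_X_sub_C_pow z j).trans_le j.is_le
  -- `Qᵀ` combines the moment rows with the coefficients of `(X - z) ^ a` in row `a < n`
  -- and leaves the border row alone.
  set Q : Fin (n + 1) → R[X] := Fin.lastCases (X ^ n) fun a => (X - C z) ^ (a : ℕ)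
  have hQ : (coeffMatrix Q).det = 1 := by
    refine det_coeffMatrix_eq_one (fun a => ?_) (fun a => ?_) <;>
      induction a using Fin.lastCases <;>
      simp [Q, monic_X_pow, (monic_X_sub_C z).pow, natDegree_X_sub_C_pow]
  have key : (coeffMatrix Q)ᵀ * ((hankelMatrix m n).updateRow (Fin.last n)
      (fun j => (x + z) ^ (j : ℕ)) * coeffMatrix fun j => (X - C z) ^ (j : ℕ)) =
      (hankelMatrix (shiftedMoments m z) n).updateRow (Fin.last n) fun j => x ^ (j : ℕ) := by
    rw [Matrix.updateRow_mul, pow_vecMul_coeffMatrix fun j => Nat.lt_succ_of_le (hdeg j)]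
    ext a b
    induction a using Fin.lastCases with
    | last =>
      rw [Matrix.mul_apply, Fintype.sum_eq_single (Fin.last n)]
      · simp [Q, coeffMatrix]
      · intro i hi
        have : (i : ℕ) ≠ n := fun h => hi (Fin.ext h)
        simp [Q, coeffMatrix, coeff_X_pow, this]
    | cast a =>
      have hlt : ((X - C z) ^ (a : ℕ)).natDegree < n := by rw [natDegree_X_sub_C_pow]; exact a.2
      rw [Matrix.mul_apply, Fin.sum_univ_castSucc]
      simp only [Matrix.updateRow_ne (Fin.castSucc_ne_last _),
        hankelMatrix_mul_coeffMatrix_apply m hdeg]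
      simp only [Q, coeffMatrix, Matrix.transpose_apply, Matrix.of_apply, Fin.lastCases_castSucc,
        Fin.val_castSucc, Fin.val_last, coeff_eq_zero_of_natDegree_lt hlt, zero_mul, add_zero]
      rw [hankelMatrix, Matrix.of_apply, Fin.val_castSucc, shiftedMoments_add,
        (momentFunctional m).map_mul_eq_sum_coeff_smul hlt]
      rfl
  rw [← key, Matrix.det_mul, Matrix.det_mul, Matrix.det_transpose, hQ,
    det_coeffMatrix_X_sub_C_pow, one_mul, mul_one]

end HankelMatrix

theorem hankelDet_zero (m : ℕ → ℝ) : hankelDet m 0 = m 0 := by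
  simp [hankelDet]

theorem DPoly_eq_det_updateRow (m : ℕ → ℝ) (n : ℕ) :
    DPoly m n = (((hankelMatrix m n).map C).updateRow (Fin.last n) fun j => X ^ (j : ℕ)).det := by
  refine congrArg Matrix.det (Matrix.ext fun i j => ?_)
  induction i using Fin.lastCases with
  | last => simp
  | cast i => simp [hankelMatrix]

theorem DPoly_eq_sum (m : ℕ → ℝ) (n : ℕ) :
    DPoly m n = ∑ j, C ((hankelMatrix m n).adjugate j (Fin.last n)) * X ^ (j : ℕ) := by
  rw [DPoly_eq_det_updateRow, Matrix.det_updateRow_eq_sum_mul_adjugate, ← RingHom.mapMatrix_apply,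
    ← RingHom.map_adjugate]
  exact sum_congr rfl fun j _ => mul_comm _ _

theorem natDegree_DPoly_le (m : ℕ → ℝ) (n : ℕ) : (DPoly m n).natDegree ≤ n := by
  rw [DPoly_eq_sum]
  exact natDegree_sum_le_of_forall_le _ _ fun j _ => (natDegree_C_mul_X_pow_le _ _).trans j.is_le

theorem eval_DPoly (m : ℕ → ℝ) (n : ℕ) (y : ℝ) :
    (DPoly m n).eval y =
      ((hankelMatrix m n).updateRow (Fin.last n) fun j => y ^ (j : ℕ)).det := by
  rw [DPoly_eq_sum, Matrix.det_updateRow_eq_sum_mul_adjugate, eval_finsetSum]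
  simp only [eval_mul, eval_C, eval_pow, eval_X, mul_comm]

theorem momentFunctional_X_pow_mul_DPoly (m : ℕ → ℝ) (n i : ℕ) :
    momentFunctional m (X ^ i * DPoly m n) =
      ((hankelMatrix m n).updateRow (Fin.last n) fun j => m (i + j)).det := by
  rw [DPoly_eq_sum, Matrix.det_updateRow_eq_sum_mul_adjugate, mul_sum, map_sum]
  refine sum_congr rfl fun j _ => ?_
  rw [mul_left_comm, ← pow_add, momentFunctional_C_mul, momentFunctional_X_pow, mul_comm]

theorem momentFunctional_X_pow_mul_DPoly_of_lt (m : ℕ → ℝ) {n i : ℕ} (h : i < n) :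
    momentFunctional m (X ^ i * DPoly m n) = 0 := by
  rw [momentFunctional_X_pow_mul_DPoly]
  exact Matrix.det_updateRow_eq_zero (i := (⟨i, by omega⟩ : Fin (n + 1))) (Fin.ne_of_lt h)

theorem momentFunctional_X_pow_mul_DPoly_self (m : ℕ → ℝ) (n : ℕ) :
    momentFunctional m (X ^ n * DPoly m n) = hankelDet m n := by
  rw [momentFunctional_X_pow_mul_DPoly]
  exact congrArg Matrix.det ((hankelMatrix m n).updateRow_eq_self (Fin.last n))

theorem DPoly_shiftedMoments (m : ℕ → ℝ) (z : ℝ) (n : ℕ) :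
    DPoly (shiftedMoments m z) n = taylor z (DPoly m n) := by
  refine Polynomial.funext fun x => ?_
  rw [taylor_eval, eval_DPoly, eval_DPoly, det_updateRow_last_hankelMatrix_shiftedMoments]

theorem eval_qPoly (m : ℕ → ℝ) (n : ℕ) (z : ℝ) :
    (qPoly m n).eval z = shiftedMoments m z n := by
  rw [qPoly, shiftedMoments, sub_eq_add_neg, ← C_neg, add_pow, map_sum, eval_finsetSum]
  refine sum_congr rfl fun j _ => ?_
  rw [← C_pow, ← C_eq_natCast, mul_assoc, ← C_mul, mul_comm (X ^ j), momentFunctional_C_mul,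
    momentFunctional_X_pow]
  simp only [eval_mul, eval_C, eval_pow, eval_neg, eval_X]
  ring

theorem hankelDet_mul_det_coeff_DPoly (μ : ℕ → ℝ) (n : ℕ) :
    hankelDet μ n * (Matrix.of fun i j : Fin n => (DPoly μ (j + 1)).coeff i).det =
      (-1) ^ n * μ n * ∏ j : Fin n, hankelDet μ (j + 1) := by
  set P : Fin (n + 1) → ℝ[X] := Fin.cons (X ^ n) fun j : Fin n => DPoly μ (j + 1)
  have hdeg (j : Fin (n + 1)) : (P j).natDegree ≤ n := by
    induction j using Fin.cases with
    | zero => simp [P]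
    | succ j => exact (natDegree_DPoly_le μ _).trans j.2
  have hHP :
      (hankelMatrix μ n * coeffMatrix P).det = μ n * ∏ j : Fin n, hankelDet μ (j + 1) := by
    rw [Matrix.det_of_isLowerTriangular, Fin.prod_univ_succ]
    · simp [hankelMatrix_mul_coeffMatrix_apply μ hdeg, P, momentFunctional_X_pow_mul_DPoly_self]
    · intro i j hij
      rw [hankelMatrix_mul_coeffMatrix_apply μ hdeg]
      induction j using Fin.cases with
      | zero => exact absurd (OrderDual.toDual_lt_toDual.1 hij) (Fin.not_lt_zero i)
      | succ j =>
        exact momentFunctional_X_pow_mul_DPoly_of_lt μ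
          (by simpa [Fin.lt_def, Nat.lt_succ_iff] using hij)
  have hmul : (hankelMatrix μ n * coeffMatrix P).det = hankelDet μ n * (coeffMatrix P).det :=
    Matrix.det_mul _ _
  rw [hHP, det_coeffMatrix_cons_X_pow] at hmul
  have hsq : ((-1 : ℝ) ^ n) ^ 2 = 1 := by rw [← pow_mul, mul_comm, pow_mul, neg_one_sq, one_pow]
  linear_combination (-(-1 : ℝ) ^ n) * hmul -
    hankelDet μ n * (Matrix.of fun i j : Fin n => (DPoly μ (j + 1)).coeff i).det * hsq

theorem eval_polyWronskianR {n : ℕ} (f : Fin n → ℝ[X]) (z : ℝ) :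
    (polyWronskianR f).eval z =
      (Matrix.of fun i j : Fin n => (derivative^[i] (f j)).eval z).det := by
  rw [polyWronskianR, ← coe_evalRingHom, RingHom.map_det]
  rfl

theorem polyWronskianR_C_mul {n : ℕ} (c : Fin n → ℝ) (f : Fin n → ℝ[X]) :
    polyWronskianR (fun j => C (c j) * f j) = C (∏ j, c j) * polyWronskianR f := by
  simp only [polyWronskianR, iterate_derivative_C_mul]
  rw [map_prod]
  exact Matrix.det_mul_row (fun j => C (c j)) (Matrix.of fun i j : Fin n => derivative^[i] (f j))

theorem hankelDet_mul_polyWronskianR_DPoly (m : ℕ → ℝ) (n : ℕ) :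
    C (hankelDet m n) * polyWronskianR (fun j : Fin n => DPoly m (j + 1)) =
      C ((-1) ^ n * bigC n * ∏ j : Fin n, hankelDet m (j + 1)) * qPoly m n := by
  refine Polynomial.funext fun z => ?_
  have hW : (polyWronskianR fun j : Fin n => DPoly m (j + 1)).eval z = bigC n *
      (Matrix.of fun i j : Fin n => (DPoly (shiftedMoments m z) (j + 1)).coeff i).det := by
    simp only [eval_polyWronskianR, eval_iterate_derivative_eq_coeff_taylor,
      ← DPoly_shiftedMoments]
    rw [bigC, ← Fin.prod_univ_eq_prod_range (fun k => (k.factorial : ℝ))]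
    exact Matrix.det_mul_column (fun i : Fin n => ((i : ℕ).factorial : ℝ))
      (Matrix.of fun i j : Fin n => (DPoly (shiftedMoments m z) (j + 1)).coeff i)
  have hshift (k : ℕ) : hankelDet (shiftedMoments m z) k = hankelDet m k :=
    det_hankelMatrix_shiftedMoments m z k
  have key := hankelDet_mul_det_coeff_DPoly (shiftedMoments m z) n
  simp only [hshift] at key
  rw [eval_mul, eval_mul, eval_C, eval_C, hW, eval_qPoly]
  linear_combination bigC n * key

theorem prod_range_inv_sqrt_mul_mul {d : ℕ → ℝ} (hd : ∀ k, 0 < d k) (n : ℕ) :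
    ∏ j ∈ range n, (√(d j * d (j + 1)))⁻¹ * d (j + 1) = √(d n) / √(d 0) := by
  induction n with
  | zero => simp [(Real.sqrt_pos.2 (hd 0)).ne']
  | succ n ih =>
    have h0 := Real.sqrt_pos.2 (hd 0)
    have hn := Real.sqrt_pos.2 (hd n)
    rw [prod_range_succ, ih, Real.sqrt_mul (hd n).le]
    field_simp
    exact Real.div_sqrt

theorem sqrt_mul_mul_prod_inv_sqrt_mul_mul {d : ℕ → ℝ} (hd : ∀ k, 0 < d k) (n : ℕ) :
    √(d 0 * d n) * ∏ j : Fin n, (√(d j * d (j + 1)))⁻¹ * d (j + 1) = d n := by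
  rw [Fin.prod_univ_eq_prod_range (fun j => (√(d j * d (j + 1)))⁻¹ * d (j + 1)),
    prod_range_inv_sqrt_mul_mul hd, Real.sqrt_mul (hd 0).le]
  field_simp [(Real.sqrt_pos.2 (hd 0)).ne']
  exact Real.sq_sqrt (hd n).le

theorem statement11_general
    (m : ℕ → ℝ)
    (hD : ∀ n, 0 < hankelDet m n)
    (p : ℕ → Polynomial ℝ)
    (hp : ∀ n : ℕ, 1 ≤ n →
      p n = Polynomial.C ((Real.sqrt (hankelDet m (n - 1) * hankelDet m n))⁻¹) * DPoly m n) :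
    ∀ n : ℕ, 1 ≤ n →
      (-1 : Polynomial ℝ) ^ n * qPoly m n =
        Polynomial.C (Real.sqrt (m 0 * hankelDet m n) / bigC n) *
          polyWronskianR (fun j : Fin n => p (j.1 + 1)) := by
  intro n _
  set c : Fin n → ℝ := fun j => (√(hankelDet m j * hankelDet m (j + 1)))⁻¹
  have hpD : (fun j : Fin n => p (j.1 + 1)) = fun j => C (c j) * DPoly m (j + 1) :=
    funext fun j => hp (j + 1) (Nat.le_add_left 1 j)
  have hnorm := sqrt_mul_mul_prod_inv_sqrt_mul_mul hD n
  rw [hankelDet_zero, prod_mul_distrib] at hnorm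
  have hbigC : bigC n ≠ 0 := prod_ne_zero_iff.2 fun k _ => by positivity
  have hC : C (√(m 0 * hankelDet m n) / bigC n) * C (∏ j, c j) *
      C ((-1) ^ n * bigC n * ∏ j : Fin n, hankelDet m (j + 1)) =
        (-1) ^ n * C (hankelDet m n) := by
    rw [← C_mul, ← C_mul, ← C_1, ← C_neg, ← C_pow, ← C_mul]
    congr 1
    field_simp
    linear_combination hnorm
  rw [hpD, polyWronskianR_C_mul]
  refine mul_left_cancel₀ (C_ne_zero.2 (hD n).ne') ?_
  linear_combination (-(C (√(m 0 * hankelDet m n) / bigC n) * C (∏ j, c j))) *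
    hankelDet_mul_polyWronskianR_DPoly m n - qPoly m n * hC

/-- For a moment sequence with all Hankel determinants positive,
corresponding measure `μ`, and orthonormal polynomials
`p_n = (D_{n-1} D_n)^{-1/2} D_n(x)` (with `D_{-1} = 1`), one has
`(−1)^n q_n(z) = (√(m₀ D_n) / C_n) · W(p_1, …, p_n; z)` for every `n ≥ 1`. -/
theorem statement11
    (m : ℕ → ℝ)
    (hD : ∀ n, 0 < hankelDet m n)
    (μ : Measure ℝ)
    (hint : ∀ j : ℕ, Integrable (fun t : ℝ => t ^ j) μ)
    (hmom : ∀ j : ℕ, ∫ t : ℝ, t ^ j ∂μ = m j)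
    (p : ℕ → Polynomial ℝ)
    (hp0 : p 0 = Polynomial.C ((Real.sqrt (1 * hankelDet m 0))⁻¹) * DPoly m 0)
    (hp : ∀ n : ℕ, 1 ≤ n →
      p n = Polynomial.C ((Real.sqrt (hankelDet m (n - 1) * hankelDet m n))⁻¹) * DPoly m n) :
    ∀ n : ℕ, 1 ≤ n →
      (-1 : Polynomial ℝ) ^ n * qPoly m n =
        Polynomial.C (Real.sqrt (m 0 * hankelDet m n) / bigC n) *
          polyWronskianR (fun j : Fin n => p (j.1 + 1)) :=
  statement11_general m hD p hp
end
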